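/- Let f : X → X be an expansive homeomorphism of a compact metric space X with expansiveness constant δ, and assume X is connected with more than one point. Then for every sufficiently small γ > 0 there exists a point p ∈ X such that the connected component of p in W^s_δ(p) meets the sphere { y : d(p,y) = γ }, or the connected component of p in W^u_δ(p) meets that sphere. -/

import Mathlib

open Metric Filter Topology Set

/-- Local stable set of an invertible map. -/
def Ws {X : Type*} [MetricSpace X] (f : Equiv.Perm X) (ε : ℝ) (x : X) : Set X :=
  {y | ∀ n : ℕ, dist ((f ^ n) x) ((f ^ n) y) ≤ ε}

/-- Local unstable set of an invertible map. -/
def Wu {X : Type*} [MetricSpace X] (f : Equiv.Perm X) (ε : ℝ) (x : X) : Set X :=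
  {y | ∀ n : ℕ, dist ((f ^ (-(n : ℤ))) x) ((f ^ (-(n : ℤ))) y) ≤ ε}

/-!
If some preconnected set containing two points at distance `≥ c` has all its forward images of
diameter `≤ δ`, it lies in the local stable set of each of its points, and the intermediate value
theorem for `dist p ·` on it gives a point of the stable component on every sphere of radius
`γ ≤ c`. Otherwise every such set eventually has a forward image of diameter `> δ`. Pulling back,
by boundary bumping, a piece of size `c` of the first large image of such a set, and iterating,
gives for every `n` such a set whose first `n` backward images are `δ`-small. A limit point of
these in the compact hyperspace of nonempty compact sets, in which preconnectedness and the
diameter bounds are closed conditions, is then such a set for `f⁻¹`, and the first argument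
applies to the local unstable set.
-/

theorem exists_isClopen_mem_disjoint_of_disjoint_connectedComponent {Y : Type*}
    [TopologicalSpace Y] [T2Space Y] [CompactSpace Y] {x : Y} {S : Set Y} (hS : IsClosed S)
    (h : Disjoint (connectedComponent x) S) : ∃ V, IsClopen V ∧ x ∈ V ∧ Disjoint V S := by
  rw [connectedComponent_eq_iInter_isClopen, disjoint_iff_inter_eq_empty, inter_comm] at h
  obtain ⟨t, ht⟩ := hS.isCompact.elim_finite_subfamily_closed _ (fun s => s.2.1.isClosed) h
  refine ⟨⋂ s ∈ t, s.1, isClopen_biInter_finset fun s _ => s.2.1,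
    mem_iInter₂.2 fun s _ => s.2.2, ?_⟩
  rw [disjoint_iff_inter_eq_empty, inter_comm, ht]

/-- The boundary bumping theorem. -/
theorem IsClosed.connectedComponentIn_diff_nonempty {Y : Type*} [TopologicalSpace Y]
    [T2Space Y] [CompactSpace Y] [PreconnectedSpace Y] {F U : Set Y} (hF : IsClosed F)
    (hU : IsOpen U) (hUF : U ⊆ F) (hF' : F ≠ univ) {x : Y} (hx : x ∈ F) :
    (connectedComponentIn F x \ U).Nonempty := by
  by_contra h
  rw [not_nonempty_iff_eq_empty, sdiff_eq_empty, connectedComponentIn_eq_image hx] at h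
  have : CompactSpace F := isCompact_iff_compactSpace.1 hF.isCompact
  obtain ⟨V, hV, hxV, hVU⟩ := exists_isClopen_mem_disjoint_of_disjoint_connectedComponent
    (hU.isClosed_compl.preimage continuous_subtype_val)
    (disjoint_left.2 fun y hy hyU => hyU (h ⟨y, hy, rfl⟩))
  obtain ⟨W, hW, hWV⟩ := isOpen_induced_iff.1 hV.isOpen
  have hVW : Subtype.val '' V = W ∩ U := by
    ext y
    constructor
    · rintro ⟨y, hy, rfl⟩
      refine ⟨(hWV.symm ▸ hy : y ∈ Subtype.val ⁻¹' W), ?_⟩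
      exact by_contra fun hyU => disjoint_left.1 hVU hy hyU
    · rintro ⟨hyW, hyU⟩
      exact ⟨⟨y, hUF hyU⟩, hWV ▸ hyW, rfl⟩
  rcases isClopen_iff.1 ⟨hV.isClosed.trans hF, hVW ▸ hW.inter hU⟩ with hempty | huniv
  · exact (hempty ▸ mem_image_of_mem _ hxV : x ∈ (∅ : Set Y))
  · exact hF' (eq_univ_of_univ_subset (huniv ▸ image_subset_iff.2 fun y _ => y.2))

theorem IsCompact.exists_isPreconnected_subset_of_lt_dist {X : Type*} [MetricSpace X]
    {K : Set X} (hK : IsCompact K) (hK' : IsPreconnected K) {z w : X} (hz : z ∈ K) (hw : w ∈ K)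
    {c : ℝ} (hc : 0 ≤ c) (hzw : c < dist z w) :
    ∃ C ⊆ K, IsPreconnected C ∧ (∃ p ∈ C, ∃ q ∈ C, c ≤ dist p q) ∧ diam C ≤ 2 * c := by
  have : CompactSpace K := isCompact_iff_compactSpace.1 hK
  have : PreconnectedSpace K := Subtype.preconnectedSpace hK'
  set z' : K := ⟨z, hz⟩
  have hw' : (⟨w, hw⟩ : K) ∉ closedBall z' c := by
    rw [mem_closedBall, dist_comm]
    exact hzw.not_ge
  obtain ⟨b, hbC, hb⟩ := isClosed_closedBall.connectedComponentIn_diff_nonempty isOpen_ball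
    ball_subset_closedBall (ne_univ_iff_exists_notMem _ |>.2 ⟨_, hw'⟩) (mem_closedBall_self hc)
  have hCball : connectedComponentIn (closedBall z' c) z' ⊆ closedBall z' c :=
    connectedComponentIn_subset _ _
  refine ⟨Subtype.val '' connectedComponentIn (closedBall z' c) z',
    image_subset_iff.2 fun y _ => y.2,
    isPreconnected_connectedComponentIn.image _ continuous_subtype_val.continuousOn,
    ⟨z, ⟨z', mem_connectedComponentIn (mem_closedBall_self hc), rfl⟩, b, ⟨b, hbC, rfl⟩, ?_⟩,
    diam_le_of_subset_closedBall (x := z) hc ?_⟩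
  · rw [mem_ball, not_lt, dist_comm] at hb
    exact hb
  · rintro _ ⟨y, hy, rfl⟩
    exact hCball hy


namespace TopologicalSpace.NonemptyCompacts

theorem isClosed_setOf_isPreconnected {α : Type*} [TopologicalSpace α] [T2Space α] :
    IsClosed {K : NonemptyCompacts α | IsPreconnected (K : Set α)} := by
  refine isOpen_compl_iff.1 (isOpen_iff_forall_mem_open.2 fun K hK => ?_)
  obtain ⟨u, v, hu, hv, hKuv, huv, hKu, hKv⟩ : ∃ u v : Set α, IsClosed u ∧ IsClosed v ∧
      (K : Set α) ⊆ u ∪ v ∧ Disjoint u v ∧ ¬(K : Set α) ⊆ u ∧ ¬(K : Set α) ⊆ v := by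
    simpa only [mem_compl_iff, mem_ofPred_eq,
      isPreconnected_iff_subset_of_fully_disjoint_closed K.isCompact.isClosed, not_forall,
      not_or, exists_prop] using hK
  obtain ⟨U, V, hU, hV, hKU, hKV, hUV⟩ := SeparatedNhds.of_isCompact_isCompact
    (K.isCompact.inter_right hu) (K.isCompact.inter_right hv)
    (huv.mono inter_subset_right inter_subset_right)
  refine ⟨{L | ↑L ⊆ U ∪ V} ∩ {L | (↑L ∩ U).Nonempty} ∩ {L | (↑L ∩ V).Nonempty}, ?_,
    ((isOpen_subsets_of_isOpen (hU.union hV)).inter (isOpen_inter_nonempty_of_isOpen hU)).inter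
      (isOpen_inter_nonempty_of_isOpen hV), ⟨⟨?_, ?_⟩, ?_⟩⟩
  · rintro L ⟨⟨hLUV, hLU⟩, hLV⟩ hL
    obtain ⟨x, -, hxU, hxV⟩ := hL U V hU hV hLUV hLU hLV
    exact disjoint_left.1 hUV hxU hxV
  · intro x hx
    rcases hKuv hx with hxu | hxv
    exacts [Or.inl (hKU ⟨hx, hxu⟩), Or.inr (hKV ⟨hx, hxv⟩)]
  · obtain ⟨x, hx, hxv⟩ := not_subset.1 hKv
    exact ⟨x, hx, hKU ⟨hx, (hKuv hx).resolve_right hxv⟩⟩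
  · obtain ⟨x, hx, hxu⟩ := not_subset.1 hKu
    exact ⟨x, hx, hKV ⟨hx, (hKuv hx).resolve_left hxu⟩⟩

variable {X : Type*} [PseudoMetricSpace X]

theorem continuous_prod_self :
    Continuous fun K : NonemptyCompacts X => (K ×ˢ K : NonemptyCompacts (X × X)) :=
  continuous_prod.comp (continuous_id.prodMk continuous_id)

theorem isClosed_setOf_diam_le (δ : ℝ) :
    IsClosed {K : NonemptyCompacts X | diam (K : Set X) ≤ δ} := by
  rcases lt_or_ge δ 0 with hδ | hδ
  · convert isClosed_empty
    exact eq_empty_of_forall_notMem fun K hK => (diam_nonneg.trans hK).not_gt hδ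
  have : {K : NonemptyCompacts X | diam (K : Set X) ≤ δ} =
      (fun K => (K ×ˢ K : NonemptyCompacts (X × X))) ⁻¹'
        {L | ↑L ⊆ {p : X × X | dist p.1 p.2 ≤ δ}} := by
    ext K
    simp only [mem_ofPred_eq, mem_preimage, coe_prod, prod_subset_iff]
    exact ⟨fun h x hx y hy => (dist_le_diam_of_mem K.isCompact.isBounded hx hy).trans h,
      diam_le_of_forall_dist_le hδ⟩
  rw [this]
  exact (isClosed_subsets_of_isClosed (isClosed_le continuous_dist continuous_const)).preimage
    continuous_prod_self

theorem isClosed_setOf_exists_le_dist (c : ℝ) :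
    IsClosed {K : NonemptyCompacts X | ∃ p ∈ K, ∃ q ∈ K, c ≤ dist p q} := by
  have : {K : NonemptyCompacts X | ∃ p ∈ K, ∃ q ∈ K, c ≤ dist p q} =
      (fun K => (K ×ˢ K : NonemptyCompacts (X × X))) ⁻¹'
        {L | (↑L ∩ {p : X × X | c ≤ dist p.1 p.2}).Nonempty} := by
    ext K
    constructor
    · rintro ⟨p, hp, q, hq, h⟩
      exact ⟨(p, q), ⟨hp, hq⟩, h⟩
    · rintro ⟨⟨p, q⟩, ⟨hp, hq⟩, h⟩
      exact ⟨p, hp, q, hq, h⟩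
  rw [this]
  exact (isClosed_inter_nonempty_of_isClosed
    (isClosed_le continuous_const continuous_dist)).preimage continuous_prod_self

end TopologicalSpace.NonemptyCompacts

theorem continuous_perm_pow {X : Type*} [TopologicalSpace X] {g : Equiv.Perm X}
    (hg : Continuous g) (n : ℕ) : Continuous ⇑(g ^ n) := by
  rw [Equiv.Perm.coe_pow]
  exact hg.iterate n

theorem continuous_perm_zpow {X : Type*} [TopologicalSpace X] {f : Equiv.Perm X}
    (hf : Continuous f) (hf' : Continuous ⇑f⁻¹) (k : ℤ) : Continuous ⇑(f ^ k) := by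
  rcases k with n | n
  · exact continuous_perm_pow hf n
  · rw [zpow_negSucc, ← inv_pow]
    exact continuous_perm_pow hf' (n + 1)

theorem diam_image_le_of_subset_closure {X Y : Type*} [PseudoMetricSpace X]
    [PseudoMetricSpace Y] {φ : X → Y} (hφ : Continuous φ) {B C : Set X} (hCB : C ⊆ closure B)
    (hB : Bornology.IsBounded (φ '' B)) : diam (φ '' C) ≤ diam (φ '' B) :=
  calc diam (φ '' C) ≤ diam (closure (φ '' B)) :=
        diam_mono ((image_mono hCB).trans (image_closure_subset_closure_image hφ)) hB.closure
    _ = diam (φ '' B) := diam_closure _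

theorem exists_lt_dist_of_lt_diam {X : Type*} [PseudoMetricSpace X] {s : Set X} {r : ℝ}
    (hr : 0 ≤ r) (h : r < diam s) : ∃ x ∈ s, ∃ y ∈ s, r < dist x y := by
  by_contra! hs
  exact h.not_ge (diam_le_of_forall_dist_le hr hs)

theorem connectedComponentIn_inter_sphere_nonempty {X : Type*}
    [PseudoMetricSpace X] {A S : Set X} (hA : IsPreconnected A) (hAS : A ⊆ S) {p q : X}
    (hp : p ∈ A) (hq : q ∈ A) {γ : ℝ} (hγ : 0 ≤ γ) (hγq : γ ≤ dist p q) :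
    (connectedComponentIn S p ∩ sphere p γ).Nonempty := by
  obtain ⟨x, hx, hpx⟩ := hA.intermediate_value hp hq
    (continuous_const.dist continuous_id).continuousOn
    (show γ ∈ Icc (dist p p) (dist p q) by simpa using ⟨hγ, hγq⟩)
  exact ⟨x, hA.subset_connectedComponentIn hp hAS hx, by rwa [mem_sphere, dist_comm]⟩

section

variable {X : Type*} [MetricSpace X] {f g : Equiv.Perm X} {c δ : ℝ}

theorem Ws_inv (x : X) : Ws f⁻¹ δ x = Wu f δ x := by
  ext y
  simp only [Ws, Wu, mem_ofPred_eq, zpow_neg, zpow_natCast, inv_pow]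

theorem subset_Ws_of_forall_diam_image_le [CompactSpace X] {A : Set X}
    (hA : ∀ n : ℕ, diam (⇑(g ^ n) '' A) ≤ δ) {p : X} (hp : p ∈ A) : A ⊆ Ws g δ p :=
  fun _ hy n => (dist_le_diam_of_mem isBounded_of_compactSpace (mem_image_of_mem _ hp)
    (mem_image_of_mem _ hy)).trans (hA n)

def HasStableConnectedSets (g : Equiv.Perm X) (c δ : ℝ) : Prop :=
  ∀ n : ℕ, ∃ A : Set X, IsPreconnected A ∧ (∃ p ∈ A, ∃ q ∈ A, c ≤ dist p q) ∧
    ∀ k ≤ n, diam (⇑(g ^ k) '' A) ≤ δ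

open TopologicalSpace in
theorem HasStableConnectedSets.exists_forall_diam_image_le [CompactSpace X]
    (hg : Continuous g) (h : HasStableConnectedSets g c δ) :
    ∃ A : Set X, IsPreconnected A ∧ (∃ p ∈ A, ∃ q ∈ A, c ≤ dist p q) ∧
      ∀ k : ℕ, diam (⇑(g ^ k) '' A) ≤ δ := by
  let S : ℕ → Set (NonemptyCompacts X) := fun n =>
    {K | IsPreconnected (K : Set X) ∧ (∃ p ∈ K, ∃ q ∈ K, c ≤ dist p q) ∧
      ∀ k ≤ n, diam (⇑(g ^ k) '' K) ≤ δ}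
  have hS : ∀ n, IsClosed (S n) := fun n => by
    simp only [S, ofPred_and, ofPred_forall]
    refine NonemptyCompacts.isClosed_setOf_isPreconnected.inter
      ((NonemptyCompacts.isClosed_setOf_exists_le_dist c).inter
        (isClosed_iInter fun k => isClosed_iInter fun _ => ?_))
    exact (NonemptyCompacts.isClosed_setOf_diam_le δ).preimage
      (continuous_perm_pow hg k).nonemptyCompacts_map
  have hne : ∀ n, (S n).Nonempty := by
    intro n
    obtain ⟨A, hA, ⟨p, hp, q, hq, hpq⟩, hdiam⟩ := h n
    refine ⟨⟨⟨closure A, isClosed_closure.isCompact⟩, ⟨p, subset_closure hp⟩⟩, hA.closure,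
      ⟨p, subset_closure hp, q, subset_closure hq, hpq⟩, fun k hk => ?_⟩
    exact (diam_image_le_of_subset_closure (continuous_perm_pow hg k) subset_rfl
      isBounded_of_compactSpace).trans (hdiam k hk)
  obtain ⟨K, hK⟩ := IsCompact.nonempty_iInter_of_sequence_nonempty_isCompact_isClosed S
    (fun n K hK => ⟨hK.1, hK.2.1, fun k hk => hK.2.2 k (Nat.le_succ_of_le hk)⟩) hne
    (hS 0).isCompact hS
  obtain ⟨hK0, hwide, -⟩ := mem_iInter.1 hK 0
  exact ⟨K, hK0, hwide, fun k => (mem_iInter.1 hK k).2.2 k le_rfl⟩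

theorem exists_connectedComponentIn_Ws_inter_sphere_nonempty [CompactSpace X] {A : Set X}
    (hA : IsPreconnected A) (hwide : ∃ p ∈ A, ∃ q ∈ A, c ≤ dist p q)
    (hsmall : ∀ k : ℕ, diam (⇑(g ^ k) '' A) ≤ δ) {γ : ℝ} (hγ : 0 ≤ γ) (hγc : γ ≤ c) :
    ∃ p, (connectedComponentIn (Ws g δ p) p ∩ sphere p γ).Nonempty := by
  obtain ⟨p, hp, q, hq, hpq⟩ := hwide
  exact ⟨p, connectedComponentIn_inter_sphere_nonempty hA
    (subset_Ws_of_forall_diam_image_le hsmall hp) hp hq hγ (hγc.trans hpq)⟩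

-- `C` is a piece of size `c` of the closure of the first large image `f ^ m '' B`; for `i < 0`,
-- `f ^ i '' C` lies in the closure of `f ^ (i + m) '' B`, and `-j ≤ i + m < m`.
theorem exists_backward_small_succ [CompactSpace X] (hf : Continuous f) (hf' : Continuous ⇑f⁻¹)
    (hc : 0 ≤ c) (hcδ : 2 * c ≤ δ) {B : Set X} (hB : IsPreconnected B) {j m : ℕ} (hm : 0 < m)
    (hsmall : ∀ i : ℤ, -j ≤ i → i < m → diam (⇑(f ^ i) '' B) ≤ δ)
    (hlarge : δ < diam (⇑(f ^ (m : ℤ)) '' B)) :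
    ∃ C : Set X, IsPreconnected C ∧ (∃ p ∈ C, ∃ q ∈ C, c ≤ dist p q) ∧ diam C ≤ 2 * c ∧
      ∀ i : ℤ, -(j + 1 : ℕ) ≤ i → i ≤ 0 → diam (⇑(f ^ i) '' C) ≤ δ := by
  have hcont := continuous_perm_zpow hf hf'
  obtain ⟨z, hz, w, hw, hzw⟩ := exists_lt_dist_of_lt_diam (by linarith) hlarge
  obtain ⟨C, hCK, hC, hwide, hdiam⟩ :=
    isClosed_closure.isCompact.exists_isPreconnected_subset_of_lt_dist
      (hB.image _ (hcont m).continuousOn).closure (subset_closure hz) (subset_closure hw) hc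
      (by linarith)
  refine ⟨C, hC, hwide, hdiam, fun i hi hi0 => ?_⟩
  rcases hi0.lt_or_eq with hi0 | rfl
  · calc diam (⇑(f ^ i) '' C) ≤ diam (⇑(f ^ i) '' (⇑(f ^ (m : ℤ)) '' B)) :=
          diam_image_le_of_subset_closure (hcont i) hCK isBounded_of_compactSpace
      _ = diam (⇑(f ^ (i + m)) '' B) := by rw [image_image, zpow_add]; rfl
      _ ≤ δ := hsmall _ (by omega) (by omega)
  · simpa using hdiam.trans hcδ

theorem exists_backward_small [CompactSpace X] [PreconnectedSpace X]
    (hf : Continuous f) (hf' : Continuous ⇑f⁻¹) (hc : 0 ≤ c) (hcδ : 2 * c ≤ δ) {a b : X}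
    (hab : c < dist a b)
    (hunst : ∀ A : Set X, IsPreconnected A → (∃ p ∈ A, ∃ q ∈ A, c ≤ dist p q) →
      ∃ k : ℕ, δ < diam (⇑(f ^ k) '' A)) (j : ℕ) :
    ∃ B : Set X, IsPreconnected B ∧ (∃ p ∈ B, ∃ q ∈ B, c ≤ dist p q) ∧ diam B ≤ 2 * c ∧
      ∀ i : ℤ, -j ≤ i → i ≤ 0 → diam (⇑(f ^ i) '' B) ≤ δ := by
  classical
  induction j with
  | zero =>
    obtain ⟨C, -, hC, hwide, hdiam⟩ := isCompact_univ.exists_isPreconnected_subset_of_lt_dist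
      isPreconnected_univ (mem_univ a) (mem_univ b) hc hab
    refine ⟨C, hC, hwide, hdiam, fun i hi hi0 => ?_⟩
    obtain rfl : i = 0 := by omega
    simpa using hdiam.trans hcδ
  | succ j ih =>
    obtain ⟨B, hB, hwide, hdiam, hback⟩ := ih
    have hex := hunst B hB hwide
    obtain ⟨m, hm, hmin⟩ : ∃ m : ℕ, δ < diam (⇑(f ^ m) '' B) ∧
        ∀ k < m, diam (⇑(f ^ k) '' B) ≤ δ :=
      ⟨Nat.find hex, Nat.find_spec hex, fun k hk => not_lt.1 (Nat.find_min hex hk)⟩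
    have hm0 : 0 < m := Nat.pos_of_ne_zero <| by
      rintro rfl
      simp only [pow_zero, Equiv.Perm.coe_one, image_id] at hm
      linarith
    refine exists_backward_small_succ hf hf' hc hcδ hB hm0 (fun i hi him => ?_) (by simpa using hm)
    rcases le_or_gt i 0 with hi0 | hi0
    · exact hback i hi hi0
    · lift i to ℕ using hi0.le
      simpa using hmin i (by omega)

theorem hasStableConnectedSets_inv_of_forall_exists_lt_diam [CompactSpace X]
    [PreconnectedSpace X] (hf : Continuous f) (hf' : Continuous ⇑f⁻¹) (hc : 0 ≤ c)
    (hcδ : 2 * c ≤ δ) {a b : X} (hab : c < dist a b)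
    (hunst : ∀ A : Set X, IsPreconnected A → (∃ p ∈ A, ∃ q ∈ A, c ≤ dist p q) →
      ∃ k : ℕ, δ < diam (⇑(f ^ k) '' A)) :
    HasStableConnectedSets f⁻¹ c δ := by
  intro n
  obtain ⟨B, hB, hwide, -, hback⟩ := exists_backward_small hf hf' hc hcδ hab hunst n
  refine ⟨B, hB, hwide, fun k hk => ?_⟩
  simpa using hback (-k) (by omega) (by omega)

end

theorem stable_or_unstable_reaches_sphere_general {X : Type*} [MetricSpace X] [CompactSpace X]
    [ConnectedSpace X] [Nontrivial X]
    (f : Equiv.Perm X) (hf : Continuous f) (hf' : Continuous f.symm)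
    (δ : ℝ) (hδ : 0 < δ) :
    ∃ γ₀ > 0, ∀ γ : ℝ, 0 < γ → γ < γ₀ → ∃ p : X,
      (connectedComponentIn (Ws f δ p) p ∩ Metric.sphere p γ).Nonempty ∨
      (connectedComponentIn (Wu f δ p) p ∩ Metric.sphere p γ).Nonempty := by
  obtain ⟨a, b, hab⟩ := exists_pair_ne X
  have hab' : 0 < dist a b := dist_pos.2 hab
  set c := min (δ / 2) (dist a b / 2)
  have hc : 0 < c := lt_min (half_pos hδ) (half_pos hab')
  have hcδ : 2 * c ≤ δ := by linarith [min_le_left (δ / 2) (dist a b / 2)]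
  have hcab : c < dist a b := (min_le_right _ _).trans_lt (half_lt_self hab')
  refine ⟨c, hc, fun γ hγ hγc => ?_⟩
  by_cases hst : ∃ A : Set X, IsPreconnected A ∧ (∃ p ∈ A, ∃ q ∈ A, c ≤ dist p q) ∧
      ∀ k : ℕ, diam (⇑(f ^ k) '' A) ≤ δ
  · obtain ⟨A, hA, hwide, hsmall⟩ := hst
    obtain ⟨p, hp⟩ := exists_connectedComponentIn_Ws_inter_sphere_nonempty hA hwide hsmall
      hγ.le hγc.le
    exact ⟨p, Or.inl hp⟩
  · push Not at hst
    obtain ⟨A, hA, hwide, hsmall⟩ := (hasStableConnectedSets_inv_of_forall_exists_lt_diam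
      hf hf' hc.le hcδ hcab hst).exists_forall_diam_image_le hf'
    obtain ⟨p, hp⟩ := exists_connectedComponentIn_Ws_inter_sphere_nonempty hA hwide hsmall
      hγ.le hγc.le
    exact ⟨p, Or.inr (Ws_inv (f := f) p ▸ hp)⟩

/-- For an expansive homeomorphism of a nontrivial connected compact metric
space, for all sufficiently small γ there is a point whose connected local
stable or unstable component reaches the sphere of radius γ. -/
theorem stable_or_unstable_reaches_sphere {X : Type*} [MetricSpace X] [CompactSpace X]
    [ConnectedSpace X] [Nontrivial X]
    (f : Equiv.Perm X) (hf : Continuous f) (hf' : Continuous f.symm)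
    (δ : ℝ) (hδ : 0 < δ)
    (hexp : ∀ x y : X, (∀ n : ℤ, dist ((f ^ n) x) ((f ^ n) y) ≤ δ) → x = y) :
    ∃ γ₀ > 0, ∀ γ : ℝ, 0 < γ → γ < γ₀ → ∃ p : X,
      (connectedComponentIn (Ws f δ p) p ∩ Metric.sphere p γ).Nonempty ∨
      (connectedComponentIn (Wu f δ p) p ∩ Metric.sphere p γ).Nonempty :=
  stable_or_unstable_reaches_sphere_general f hf hf' δ hδ
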